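/- Let A_x, A_y be real symmetric negative semidefinite matrices, M_x, M_y, M_z positive definite diagonal matrices, and A_z real symmetric negative semidefinite. If λ < 0, then the matrix A = A_x⊗M_y⊗M_z + M_x⊗A_y⊗M_z + M_x⊗M_y⊗A_z + λ M_x⊗M_y⊗M_z is symmetric negative definite, and in particular invertible. -/

import Mathlib

/-!
Negating the operator gives
`(-A_x) ⊗ M_y ⊗ M_z + M_x ⊗ (-A_y) ⊗ M_z + M_x ⊗ M_y ⊗ (-A_z) + (-λ) • M_x ⊗ M_y ⊗ M_z`:
Kronecker products of positive semidefinite matrices are positive semidefinite and those of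
positive definite ones positive definite, so this is three positive semidefinite terms plus a
positive definite one, hence positive definite.
-/

open Matrix Kronecker
open scoped ComplexOrder

namespace Matrix

variable {ι κ μ : Type*}

theorem IsDiag.posDef {R : Type*} [CommRing R] [PartialOrder R] [StarRing R]
    [StarOrderedRing R] [NoZeroDivisors R] [Nontrivial R]
    {M : Matrix ι ι R} (hM : M.IsDiag) (hpos : ∀ i, 0 < M i i) : M.PosDef := by
  classical
  rw [← hM.diagonal_diag]
  exact posDef_diagonal_iff.mpr hpos

section TrivialStar

variable [Fintype ι] {R : Type*} [CommRing R] [PartialOrder R] [IsOrderedAddMonoid R]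
  [StarRing R] [TrivialStar R] {A : Matrix ι ι R}

theorem posSemidef_neg_iff_dotProduct_mulVec_nonpos :
    (-A).PosSemidef ↔ A.IsSymm ∧ ∀ x, x ⬝ᵥ A *ᵥ x ≤ 0 := by
  simp [posSemidef_iff_dotProduct_mulVec, neg_mulVec]

theorem posDef_neg_iff_dotProduct_mulVec_neg :
    (-A).PosDef ↔ A.IsSymm ∧ ∀ x, x ≠ 0 → x ⬝ᵥ A *ᵥ x < 0 := by
  simp [posDef_iff_dotProduct_mulVec, neg_mulVec]

end TrivialStar

variable [Finite ι] [Finite κ] [Finite μ] {𝕜 : Type*} [RCLike 𝕜]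

theorem posDef_neg_kronecker_sum_add_smul
    {A₁ M₁ : Matrix ι ι 𝕜} {A₂ M₂ : Matrix κ κ 𝕜} {A₃ M₃ : Matrix μ μ 𝕜} {lam : ℝ}
    (hA₁ : (-A₁).PosSemidef) (hA₂ : (-A₂).PosSemidef) (hA₃ : (-A₃).PosSemidef)
    (hM₁ : M₁.PosDef) (hM₂ : M₂.PosDef) (hM₃ : M₃.PosDef) (hlam : lam < 0) :
    (-(A₁ ⊗ₖ (M₂ ⊗ₖ M₃) + M₁ ⊗ₖ (A₂ ⊗ₖ M₃) + M₁ ⊗ₖ (M₂ ⊗ₖ A₃)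
      + lam • (M₁ ⊗ₖ (M₂ ⊗ₖ M₃)))).PosDef := by
  have h₁ := hA₁.kronecker (hM₂.posSemidef.kronecker hM₃.posSemidef)
  have h₂ := hM₁.posSemidef.kronecker (hA₂.kronecker hM₃.posSemidef)
  have h₃ := hM₁.posSemidef.kronecker (hM₂.posSemidef.kronecker hA₃)
  have h₄ := (hM₁.kronecker (hM₂.kronecker hM₃)).smul (neg_pos.mpr hlam)
  convert PosDef.posSemidef_add ((h₁.add h₂).add h₃) h₄ using 1
  ext ⟨i, j, k⟩ ⟨i', j', k'⟩
  simp only [kroneckerMap_apply, neg_apply, add_apply, smul_apply, neg_smul]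
  ring

end Matrix

/-- If `Ax, Ay, Az` are symmetric negative semidefinite, the `M`'s are positive
definite diagonal, and `λ < 0`, then the separable operator `A` is symmetric
negative definite, hence invertible. -/
theorem stmt6 {nx ny nz : ℕ}
    (Ax Mx : Matrix (Fin nx) (Fin nx) ℝ)
    (Ay My : Matrix (Fin ny) (Fin ny) ℝ)
    (Az Mz : Matrix (Fin nz) (Fin nz) ℝ) (lam : ℝ)
    (hAxs : Ax.IsSymm) (hAys : Ay.IsSymm) (hAzs : Az.IsSymm)
    (hAx : ∀ x, x ⬝ᵥ Ax.mulVec x ≤ 0)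
    (hAy : ∀ x, x ⬝ᵥ Ay.mulVec x ≤ 0)
    (hAz : ∀ x, x ⬝ᵥ Az.mulVec x ≤ 0)
    (hMx : Mx.IsDiag) (hMy : My.IsDiag) (hMz : Mz.IsDiag)
    (hMxp : ∀ i, 0 < Mx i i) (hMyp : ∀ j, 0 < My j j) (hMzp : ∀ k, 0 < Mz k k)
    (hlam : lam < 0) :
    (Ax ⊗ₖ (My ⊗ₖ Mz) + Mx ⊗ₖ (Ay ⊗ₖ Mz) + Mx ⊗ₖ (My ⊗ₖ Az)
        + lam • (Mx ⊗ₖ (My ⊗ₖ Mz))).IsSymm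
    ∧ (∀ x : Fin nx × Fin ny × Fin nz → ℝ, x ≠ 0 →
        x ⬝ᵥ (Ax ⊗ₖ (My ⊗ₖ Mz) + Mx ⊗ₖ (Ay ⊗ₖ Mz) + Mx ⊗ₖ (My ⊗ₖ Az)
          + lam • (Mx ⊗ₖ (My ⊗ₖ Mz))).mulVec x < 0)
    ∧ IsUnit (Ax ⊗ₖ (My ⊗ₖ Mz) + Mx ⊗ₖ (Ay ⊗ₖ Mz) + Mx ⊗ₖ (My ⊗ₖ Az)
        + lam • (Mx ⊗ₖ (My ⊗ₖ Mz))).det := by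
  have hA := posDef_neg_kronecker_sum_add_smul
    (posSemidef_neg_iff_dotProduct_mulVec_nonpos.mpr ⟨hAxs, hAx⟩)
    (posSemidef_neg_iff_dotProduct_mulVec_nonpos.mpr ⟨hAys, hAy⟩)
    (posSemidef_neg_iff_dotProduct_mulVec_nonpos.mpr ⟨hAzs, hAz⟩)
    (hMx.posDef hMxp) (hMy.posDef hMyp) (hMz.posDef hMzp) hlam
  obtain ⟨hsymm, hneg⟩ := posDef_neg_iff_dotProduct_mulVec_neg.mp hA
  refine ⟨hsymm, hneg, ?_⟩
  rw [← isUnit_iff_isUnit_det, ← IsUnit.neg_iff]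
  exact hA.isUnit
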